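/- arXiv:2509.14047 — 4 statements merged into one kernel-verified Lean document; each statement's English description precedes it below -/
import Mathlib

section
/- Suppose a system with matrices A, B, C, D and storage matrix P ≻ 0 satisfies the dissipativity LMI [I,0;A,B]ᵀ diag(P,−P)[I,0;A,B] + [0,I;C,D]ᵀ S [0,I;C,D] ≥ 0, where S ∈ S^{q+p} is invertible with inertia (p,0,q). Then the dual LMI holds: [I,0;Aᵀ,Cᵀ]ᵀ diag(P⁻¹, −P⁻¹)[I,0;Aᵀ,Cᵀ] + [0,I;Bᵀ,Dᵀ]ᵀ [0,−I;I,0] S⁻¹ [0,−I;I,0] [0,I;Bᵀ,Dᵀ] ≥ 0. -/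
/-!
Let `Q` be the quadratic form of `M = diag(P, -P, S)` on `ℝⁿ × ℝⁿ × ℝ^(q+p)`. The primal LMI says
that `Q ≥ 0` on the `(n + q)`-dimensional graph `{(x, Ax + Bu, u, Cx + Du)}` of the system, while
`Q` is negative definite on a subspace of codimension `n + q` (first component zero, last one in
the negative eigenspace of `S`). Hence `Q ≤ 0` on the `Q`-orthogonal complement of the graph: a vector there with
`Q > 0` would span, together with the graph, an `(n + q + 1)`-dimensional subspace on which `Q ≥ 0`,
and it would meet the negative definite subspace. That complement is `M⁻¹` applied to the Euclidean
orthogonal complement of the graph, which is the range of the adjoint system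
`(ξ, η) ↦ (Aᵀξ + Cᵀη, -ξ, Bᵀξ + Dᵀη, -η)`, and pulled back along this map the form of `M⁻¹` is
minus the dual LMI form.
-/

open Matrix

/-- The inertia (ρ₋, ρ₀, ρ₊) of a real symmetric matrix. -/
noncomputable def inertia {n : Type*} [Fintype n] [DecidableEq n]
    (A : Matrix n n ℝ) (hA : A.IsHermitian) : ℕ × ℕ × ℕ :=
  (Fintype.card {i // hA.eigenvalues i < 0},
   Fintype.card {i // hA.eigenvalues i = 0},
   Fintype.card {i // 0 < hA.eigenvalues i})

namespace Matrix

variable {m m' k ι ι' : Type*} [Fintype m] [Fintype m']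

/-- When `K` has `r` rows, this says that `M` has at most `r` nonnegative eigenvalues. -/
def NegDefOnKer (M : Matrix m m ℝ) (K : Matrix ι m ℝ) : Prop :=
  ∀ v, K *ᵥ v = 0 → v ≠ 0 → v ⬝ᵥ (M *ᵥ v) < 0

theorem NegDefOnKer.dotProduct_mulVec_nonpos {M : Matrix m m ℝ} {K : Matrix ι m ℝ}
    (hK : M.NegDefOnKer K) {v : m → ℝ} (hv : K *ᵥ v = 0) : v ⬝ᵥ (M *ᵥ v) ≤ 0 := by
  rcases eq_or_ne v 0 with rfl | hv0
  · simp
  · exact (hK v hv hv0).le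

theorem NegDefOnKer.fromBlocks {M₁ : Matrix m m ℝ} {M₂ : Matrix m' m' ℝ} {K₁ : Matrix ι m ℝ}
    {K₂ : Matrix ι' m' ℝ} (h₁ : M₁.NegDefOnKer K₁) (h₂ : M₂.NegDefOnKer K₂) :
    (fromBlocks M₁ 0 0 M₂).NegDefOnKer (fromBlocks K₁ 0 0 K₂) := by
  intro v
  obtain ⟨v₁, v₂, rfl⟩ : ∃ v₁ v₂, v = Sum.elim v₁ v₂ := ⟨_, _, (Sum.elim_comp_inl_inr v).symm⟩
  simp only [fromBlocks_mulVec, Sum.elim_comp_inl, Sum.elim_comp_inr, zero_mulVec, add_zero,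
    zero_add, sumElim_dotProduct_sumElim, ← Sum.elim_zero_zero, Sum.elim_eq_iff, ne_eq,
    not_and_or]
  rintro ⟨hK₁, hK₂⟩ (hv₁ | hv₂)
  · linarith [h₁ v₁ hK₁ hv₁, h₂.dotProduct_mulVec_nonpos hK₂]
  · linarith [h₁.dotProduct_mulVec_nonpos hK₁, h₂ v₂ hK₂ hv₂]

theorem PosDef.negDefOnKer_fromBlocks_neg [DecidableEq m] {P : Matrix m m ℝ} (hP : P.PosDef) :
    (fromBlocks P 0 0 (-P)).NegDefOnKer (fromCols (1 : Matrix m m ℝ) 0) := by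
  intro v
  obtain ⟨v₁, v₂, rfl⟩ : ∃ v₁ v₂, v = Sum.elim v₁ v₂ := ⟨_, _, (Sum.elim_comp_inl_inr v).symm⟩
  rw [fromCols_mulVec_sumElim, one_mulVec, zero_mulVec, add_zero]
  rintro rfl hv
  have hv₂ : v₂ ≠ 0 := fun h => hv (by rw [h, Sum.elim_zero_zero])
  simpa [fromBlocks_mulVec, sumElim_dotProduct_sumElim, neg_mulVec] using
    hP.dotProduct_mulVec_pos hv₂

theorem IsHermitian.dotProduct_mulVec_eq_sum_eigenvalues [DecidableEq m] {S : Matrix m m ℝ}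
    (hS : S.IsHermitian) (y : m → ℝ) :
    y ⬝ᵥ (S *ᵥ y) =
      ∑ i, hS.eigenvalues i * (star (hS.eigenvectorUnitary : Matrix m m ℝ) *ᵥ y) i ^ 2 := by
  set U : Matrix m m ℝ := ↑hS.eigenvectorUnitary
  have hS' : S = U * diagonal hS.eigenvalues * star U := by
    simpa [RCLike.ofReal_real_eq_id] using hS.spectral_theorem
  have hyU : y ᵥ* U = star U *ᵥ y := by
    rw [← mulVec_transpose]; rfl
  conv_lhs => rw [hS']
  rw [← mulVec_mulVec, ← mulVec_mulVec, dotProduct_mulVec, hyU, dotProduct]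
  simp only [mulVec_diagonal]
  exact Finset.sum_congr rfl fun i _ => by ring

theorem IsHermitian.negDefOnKer_star_eigenvectorUnitary [DecidableEq m] {S : Matrix m m ℝ}
    (hS : S.IsHermitian) (h0 : ∀ i, hS.eigenvalues i ≠ 0) :
    S.NegDefOnKer ((star (hS.eigenvectorUnitary : Matrix m m ℝ)).submatrix
      (Subtype.val : {i // 0 < hS.eigenvalues i} → m) id) := by
  set U : Matrix m m ℝ := ↑hS.eigenvectorUnitary
  intro y hKy hy
  set c := star U *ᵥ y
  have hpos : ∀ i, 0 < hS.eigenvalues i → c i = 0 := fun i hi => congrFun hKy ⟨i, hi⟩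
  have hneg : ∀ i, c i ≠ 0 → hS.eigenvalues i < 0 := fun i hi =>
    (h0 i).lt_of_le (not_lt.mp fun h => hi (hpos i h))
  have hc : c ≠ 0 := by
    intro hc
    apply hy
    rw [← one_mulVec y, ← Unitary.coe_mul_star_self hS.eigenvectorUnitary, ← mulVec_mulVec]
    exact (congrArg (U *ᵥ ·) hc).trans (mulVec_zero U)
  obtain ⟨j, hj⟩ := Function.ne_iff.mp hc
  rw [hS.dotProduct_mulVec_eq_sum_eigenvalues]
  change ∑ i, hS.eigenvalues i * c i ^ 2 < 0
  refine Finset.sum_neg' (fun i _ => ?_) ⟨j, Finset.mem_univ j, ?_⟩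
  · by_cases hi : c i = 0
    · simp [hi]
    · exact mul_nonpos_of_nonpos_of_nonneg (hneg i hi).le (sq_nonneg _)
  · exact mul_neg_of_neg_of_pos (hneg j hj) (pow_two_pos_of_ne_zero hj)

theorem IsHermitian.dotProduct_mulVec_add_smul {M : Matrix m m ℝ} (hM : M.IsHermitian)
    (x y : m → ℝ) (t : ℝ) : (x + t • y) ⬝ᵥ (M *ᵥ (x + t • y)) =
      x ⬝ᵥ (M *ᵥ x) + 2 * t * (x ⬝ᵥ (M *ᵥ y)) + t ^ 2 * (y ⬝ᵥ (M *ᵥ y)) := by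
  have hyx : y ⬝ᵥ (M *ᵥ x) = x ⬝ᵥ (M *ᵥ y) := by
    rw [← dotProduct_transpose_mulVec, ← conjTranspose_eq_transpose_of_trivial, hM.eq]
  simp only [mulVec_add, mulVec_smul, dotProduct_add, add_dotProduct, dotProduct_smul,
    smul_dotProduct, smul_eq_mul, hyx]
  ring

theorem transpose_fromRows_mul_fromBlocks_mul_fromRows {m₁ m₂ R : Type*} [Fintype m₁]
    [Fintype m₂] [CommRing R] (K₁ : Matrix m₁ k R) (K₂ : Matrix m₂ k R) (M : Matrix m₁ m₁ R)
    (N : Matrix m₂ m₂ R) :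
    (fromRows K₁ K₂)ᵀ * fromBlocks M 0 0 N * fromRows K₁ K₂ = K₁ᵀ * M * K₁ + K₂ᵀ * N * K₂ := by
  simp [transpose_fromRows, fromCols_mul_fromBlocks, fromCols_mul_fromRows]

variable [Fintype k] [Fintype ι]

theorem NegDefOnKer.dotProduct_mulVec_nonpos_of_orthogonal {M : Matrix m m ℝ}
    {K : Matrix ι m ℝ} (hK : M.NegDefOnKer K) (hM : M.IsHermitian) {G : Matrix m k ℝ}
    (hG : Function.Injective G.mulVec) (hcard : Fintype.card ι ≤ Fintype.card k)
    (hGMG : ∀ a, 0 ≤ (G *ᵥ a) ⬝ᵥ (M *ᵥ (G *ᵥ a))) {v : m → ℝ} (hv : Gᵀ *ᵥ (M *ᵥ v) = 0) :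
    v ⬝ᵥ (M *ᵥ v) ≤ 0 := by
  by_contra! hpos
  let Ψ : ((k → ℝ) × ℝ) →ₗ[ℝ] (ι → ℝ) :=
    K.mulVecLin ∘ₗ G.mulVecLin.coprod (LinearMap.toSpanSingleton ℝ _ v)
  have hΨ : Function.Injective Ψ := by
    rw [← LinearMap.ker_eq_bot, LinearMap.ker_eq_bot']
    rintro ⟨a, t⟩ hKw
    set w := G *ᵥ a + t • v with hw
    have hcross : (G *ᵥ a) ⬝ᵥ (M *ᵥ v) = 0 := by
      rw [dotProduct_comm, ← dotProduct_transpose_mulVec, hv, dotProduct_zero]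
    have hQw : w ⬝ᵥ (M *ᵥ w) = (G *ᵥ a) ⬝ᵥ (M *ᵥ (G *ᵥ a)) + t ^ 2 * (v ⬝ᵥ (M *ᵥ v)) := by
      rw [hw, hM.dotProduct_mulVec_add_smul, hcross]; ring
    have hw0 : w = 0 := by
      by_contra hw0
      nlinarith [hK w hKw hw0, hGMG a, sq_nonneg t]
    have ht : t = 0 := by
      rw [hw0, zero_dotProduct] at hQw
      have : t ^ 2 = 0 := by nlinarith [hGMG a, sq_nonneg t]
      exact pow_eq_zero_iff two_ne_zero |>.mp this
    rw [hw, ht, zero_smul, add_zero, ← mulVec_zero G] at hw0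
    simp [hG hw0, ht]
  have := LinearMap.finrank_le_finrank_of_injective hΨ
  simp only [Module.finrank_prod, Module.finrank_fintype_fun_eq_card, Module.finrank_self] at this
  omega

theorem NegDefOnKer.posSemidef_neg_transpose_mul_inv_mul [DecidableEq m] {M : Matrix m m ℝ}
    {K : Matrix ι m ℝ} (hK : M.NegDefOnKer K) (hM : M.IsHermitian) (hMinv : IsUnit M)
    {G : Matrix m k ℝ} (hG : Function.Injective G.mulVec)
    (hcard : Fintype.card ι ≤ Fintype.card k) (hGMG : (Gᵀ * M * G).PosSemidef)
    {H : Matrix m m' ℝ} (hGH : Gᵀ * H = 0) :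
    (-(Hᵀ * M⁻¹ * H)).PosSemidef := by
  have hMM' : M * M⁻¹ = 1 := mul_nonsing_inv M ((isUnit_iff_isUnit_det M).mp hMinv)
  refine .of_dotProduct_mulVec_nonneg ?_ fun ζ => ?_
  · rw [← conjTranspose_eq_transpose_of_trivial]
    exact (isHermitian_conjTranspose_mul_mul H hM.inv).neg
  have hGu : Gᵀ *ᵥ (H *ᵥ ζ) = 0 := by rw [mulVec_mulVec, hGH, zero_mulVec]
  have hquad : star ζ ⬝ᵥ (-(Hᵀ * M⁻¹ * H) *ᵥ ζ) = -((H *ᵥ ζ) ⬝ᵥ (M⁻¹ *ᵥ (H *ᵥ ζ))) := by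
    rw [star_trivial, neg_mulVec, dotProduct_neg, ← mulVec_mulVec, ← mulVec_mulVec,
      dotProduct_transpose_mulVec, dotProduct_comm]
  generalize H *ᵥ ζ = u at hGu hquad
  have hMv : M *ᵥ (M⁻¹ *ᵥ u) = u := by rw [mulVec_mulVec, hMM', one_mulVec]
  have hGMG' (a : k → ℝ) : 0 ≤ (G *ᵥ a) ⬝ᵥ (M *ᵥ (G *ᵥ a)) := by
    simpa [← mulVec_mulVec, dotProduct_transpose_mulVec, dotProduct_comm (G *ᵥ a)]
      using hGMG.dotProduct_mulVec_nonneg a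
  have key := hK.dotProduct_mulVec_nonpos_of_orthogonal hM hG hcard hGMG' (v := M⁻¹ *ᵥ u)
    (by rw [hMv, hGu])
  rw [hMv, dotProduct_comm] at key
  linarith

end Matrix

section SystemGraph

variable {n q p : Type*} [Fintype n] [Fintype q] [Fintype p] [DecidableEq n] [DecidableEq q]
  [DecidableEq p] (A : Matrix n n ℝ) (B : Matrix n q ℝ) (C : Matrix p n ℝ) (D : Matrix p q ℝ)

def systemGraph : Matrix ((n ⊕ n) ⊕ (q ⊕ p)) (n ⊕ q) ℝ :=
  fromRows (fromBlocks 1 0 A B) (fromBlocks 0 1 C D)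

def adjointGraph : Matrix ((n ⊕ n) ⊕ (q ⊕ p)) (n ⊕ p) ℝ :=
  fromRows (fromBlocks Aᵀ Cᵀ (-1) 0) (fromBlocks Bᵀ Dᵀ 0 (-1))

omit [Fintype p] [DecidableEq p] in
theorem systemGraph_mulVec_injective : Function.Injective (systemGraph A B C D).mulVec := by
  intro a b hab
  rw [← Sum.elim_comp_inl_inr a, ← Sum.elim_comp_inl_inr b] at hab ⊢
  simp only [systemGraph, fromRows_mulVec, fromBlocks_mulVec, Sum.elim_comp_inl,
    Sum.elim_comp_inr, Sum.elim_eq_iff, one_mulVec, zero_mulVec, add_zero, zero_add] at hab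
  rw [hab.1.1, hab.2.1]

theorem transpose_systemGraph_mul_adjointGraph :
    (systemGraph A B C D)ᵀ * adjointGraph A B C D = 0 := by
  simp [systemGraph, adjointGraph, transpose_fromRows, fromCols_mul_fromRows,
    fromBlocks_transpose, fromBlocks_multiply, fromBlocks_add, ← fromBlocks_zero]

theorem dualForm_eq_neg_transpose_adjointGraph_mul_mul (X : Matrix n n ℝ)
    (Y : Matrix (q ⊕ p) (q ⊕ p) ℝ) :
    (fromBlocks (1 : Matrix n n ℝ) 0 Aᵀ Cᵀ)ᵀ * fromBlocks X 0 0 (-X) *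
        fromBlocks (1 : Matrix n n ℝ) 0 Aᵀ Cᵀ +
      (fromBlocks 0 (1 : Matrix p p ℝ) Bᵀ Dᵀ)ᵀ *
        ((fromBlocks 0 (-1) 1 0 : Matrix (p ⊕ q) (q ⊕ p) ℝ) * Y *
          (fromBlocks 0 (-1) 1 0 : Matrix (q ⊕ p) (p ⊕ q) ℝ)) *
        fromBlocks 0 (1 : Matrix p p ℝ) Bᵀ Dᵀ =
    -((adjointGraph A B C D)ᵀ * fromBlocks (fromBlocks X 0 0 (-X)) 0 0 Y *
      adjointGraph A B C D) := by
  rw [adjointGraph, transpose_fromRows_mul_fromBlocks_mul_fromRows, neg_add]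
  congr 1
  · simp [fromBlocks_transpose, fromBlocks_multiply, fromBlocks_neg, Matrix.mul_assoc]
  · have hl : (fromBlocks 0 (1 : Matrix p p ℝ) Bᵀ Dᵀ)ᵀ *
        (fromBlocks 0 (-1) 1 0 : Matrix (p ⊕ q) (q ⊕ p) ℝ) = (fromBlocks Bᵀ Dᵀ 0 (-1))ᵀ := by
      simp [fromBlocks_transpose, fromBlocks_multiply]
    have hr : (fromBlocks 0 (-1) 1 0 : Matrix (q ⊕ p) (p ⊕ q) ℝ) *
        fromBlocks 0 (1 : Matrix p p ℝ) Bᵀ Dᵀ = -fromBlocks Bᵀ Dᵀ 0 (-1) := by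
      simp [fromBlocks_multiply, fromBlocks_neg]
    rw [← Matrix.mul_assoc, ← Matrix.mul_assoc, hl,
      Matrix.mul_assoc _ _ (fromBlocks 0 1 Bᵀ Dᵀ), hr, Matrix.mul_neg]

end SystemGraph

/-- Dual dissipativity LMI: if the primal dissipativity LMI holds with P ≻ 0
and S invertible with inertia (p,0,q), then the dual LMI holds. -/
theorem stmt_6 {n q p : ℕ}
    (A : Matrix (Fin n) (Fin n) ℝ) (B : Matrix (Fin n) (Fin q) ℝ)
    (C : Matrix (Fin p) (Fin n) ℝ) (D : Matrix (Fin p) (Fin q) ℝ)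
    (S : Matrix (Fin q ⊕ Fin p) (Fin q ⊕ Fin p) ℝ)
    (hS : S.IsHermitian) (hSinv : IsUnit S)
    (hin : inertia S hS = (p, 0, q))
    (P : Matrix (Fin n) (Fin n) ℝ) (hP : P.PosDef)
    (hLMI : ((fromBlocks (1 : Matrix (Fin n) (Fin n) ℝ) 0 A B)ᵀ * fromBlocks P 0 0 (-P) * fromBlocks (1 : Matrix (Fin n) (Fin n) ℝ) 0 A B +
             (fromBlocks 0 (1 : Matrix (Fin q) (Fin q) ℝ) C D)ᵀ * S * fromBlocks 0 (1 : Matrix (Fin q) (Fin q) ℝ) C D).PosSemidef) :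
    ((fromBlocks (1 : Matrix (Fin n) (Fin n) ℝ) 0 Aᵀ Cᵀ)ᵀ * fromBlocks P⁻¹ 0 0 (-(P⁻¹)) * fromBlocks (1 : Matrix (Fin n) (Fin n) ℝ) 0 Aᵀ Cᵀ +
     (fromBlocks 0 (1 : Matrix (Fin p) (Fin p) ℝ) Bᵀ Dᵀ)ᵀ *
       ((fromBlocks 0 (-1) 1 0 : Matrix (Fin p ⊕ Fin q) (Fin q ⊕ Fin p) ℝ) * S⁻¹ *
        (fromBlocks 0 (-1) 1 0 : Matrix (Fin q ⊕ Fin p) (Fin p ⊕ Fin q) ℝ)) *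
       fromBlocks 0 (1 : Matrix (Fin p) (Fin p) ℝ) Bᵀ Dᵀ).PosSemidef := by
  classical
  have h0 : ∀ i, hS.eigenvalues i ≠ 0 := fun i hi => by
    have : Fintype.card {i // hS.eigenvalues i = 0} = 0 := congrArg (·.2.1) hin
    exact (Fintype.card_eq_zero_iff.mp this).false ⟨i, hi⟩
  have hq : Fintype.card {i // 0 < hS.eigenvalues i} = q := congrArg (·.2.2) hin
  have hK := hP.negDefOnKer_fromBlocks_neg.fromBlocks (hS.negDefOnKer_star_eigenvectorUnitary h0)
  have hM : (fromBlocks (fromBlocks P 0 0 (-P)) 0 0 S).IsHermitian :=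
    .fromBlocks (.fromBlocks hP.1 (by simp) hP.1.neg) (by simp) hS
  have hMinv : fromBlocks (fromBlocks P 0 0 (-P)) 0 0 S *
      fromBlocks (fromBlocks P⁻¹ 0 0 (-P⁻¹)) 0 0 S⁻¹ = 1 := by
    have hPP : P * P⁻¹ = 1 := mul_nonsing_inv P ((isUnit_iff_isUnit_det P).mp hP.isUnit)
    have hSS : S * S⁻¹ = 1 := mul_nonsing_inv S ((isUnit_iff_isUnit_det S).mp hSinv)
    simp [fromBlocks_multiply, hPP, hSS, fromBlocks_one]
  rw [dualForm_eq_neg_transpose_adjointGraph_mul_mul, ← inv_eq_right_inv hMinv]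
  refine hK.posSemidef_neg_transpose_mul_inv_mul hM (IsUnit.of_mul_eq_one _ hMinv)
    (systemGraph_mulVec_injective A B C D) (by simp [hq]) ?_
    (transpose_systemGraph_mul_adjointGraph A B C D)
  rwa [systemGraph, transpose_fromRows_mul_fromBlocks_mul_fromRows]
end

section
/- Let M = Mᵀ ∈ ℝ^{p×p} be a symmetric block matrix with blocks M_{ij} ∈ ℝ^{p_i×p_j} (p = Σp_i), and let F_i, G_i, H_i ∈ ℝ^{p_i×p_i} with F_i, H_i symmetric. Let M_i^r := [M_{i1}, …, M_{ik}] ∈ ℝ^{p_i×p} denote the i-th block row. Suppose for each i ∈ {1,…,k} there exists β_i > 0 such that (M_i^r)ᵀ F_i M_i^r − E_iᵀ G_iᵀ M_i^r − (M_i^r)ᵀ G_i E_i + E_iᵀ (H_i − β_i I) E_i ≥ 0, where E_i ∈ ℝ^{p_i×p} is the block selector matrix picking out the i-th block of coordinates. Then MFMᵀ − MG − GᵀMᵀ + H > 0, where F = diag(F₁,…,F_k), G = diag(G₁,…,G_k), H = diag(H₁,…,H_k). -/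
/-!
The block selectors `E i` satisfy `∑ i, (E i)ᵀ * D i * E i = blockDiagonal' D`, and the block rows
are `Mr i = E i * M`. Summing the local matrices over `i` therefore gives
`Mᵀ F M - Gᵀ M - Mᵀ G + H - diag(β_i I)`, which is `M F Mᵀ - M G - Gᵀ Mᵀ + H - diag(β_i I)` since
`M` is symmetric. So the global matrix is a sum of positive semidefinite matrices plus the positive
definite `diag(β_i I)`.
-/

open Matrix

section BlockSelector

variable {ι n : Type*} (R : Type*) [DecidableEq ι] (m : ι → Type*) [∀ i, DecidableEq (m i)]

def blockSelector [Zero R] [One R] (i : ι) : Matrix (m i) (Σ j, m j) R :=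
  (1 : Matrix (Σ j, m j) (Σ j, m j) R).submatrix (Sigma.mk i) id

variable {R m}

theorem blockSelector_apply [Zero R] [One R] (i : ι) (a : m i) (j : Σ j, m j) :
    blockSelector R m i a j = if h : j.1 = i then (if h ▸ j.2 = a then 1 else 0) else 0 := by
  obtain ⟨j, b⟩ := j
  by_cases h : j = i
  · subst h
    simp [blockSelector, one_apply, eq_comm]
  · simp [blockSelector, h, Ne.symm h]

variable [∀ i, Fintype (m i)]

theorem blockSelector_mul [NonAssocSemiring R] [Fintype ι] (i : ι) (X : Matrix (Σ j, m j) n R) :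
    blockSelector R m i * X = X.submatrix (Sigma.mk i) id :=
  one_submatrix_mul _ (Equiv.refl _) X

theorem transpose_blockSelector_mul_mul [NonAssocSemiring R] (c : ι) (D : Matrix (m c) (m c) R) :
    (blockSelector R m c)ᵀ * D * blockSelector R m c = blockDiagonal' (Pi.single c D) := by
  ext ⟨i, a⟩ ⟨j, b⟩
  by_cases hi : i = c
  · subst hi
    by_cases hj : j = i
    · subst hj
      simp [blockSelector, mul_apply, one_apply, blockDiagonal'_apply]
    · simp [blockSelector, mul_apply, one_apply, blockDiagonal'_apply, Ne.symm hj]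
  · simp [blockSelector, mul_apply, one_apply, blockDiagonal'_apply, hi]

variable [Fintype ι]

theorem sum_transpose_blockSelector_mul_mul [NonAssocSemiring R]
    (D : ∀ i, Matrix (m i) (m i) R) :
    ∑ i, (blockSelector R m i)ᵀ * D i * blockSelector R m i = blockDiagonal' D := by
  simp_rw [transpose_blockSelector_mul_mul]
  conv_rhs => rw [← Finset.univ_sum_single D, ← blockDiagonal'AddMonoidHom_apply, map_sum]
  rfl

theorem sum_transpose_blockSelector_mul_mul_mul [CommSemiring R] {o : Type*}
    (X : Matrix (Σ j, m j) n R) (Y : Matrix (Σ j, m j) o R) (D : ∀ i, Matrix (m i) (m i) R) :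
    ∑ i, (blockSelector R m i * X)ᵀ * D i * (blockSelector R m i * Y) =
      Xᵀ * blockDiagonal' D * Y := by
  have hassoc : ∀ i, (blockSelector R m i * X)ᵀ * D i * (blockSelector R m i * Y) =
      Xᵀ * ((blockSelector R m i)ᵀ * D i * blockSelector R m i) * Y := by
    intro i
    simp only [transpose_mul, Matrix.mul_assoc]
  rw [Finset.sum_congr rfl fun i _ => hassoc i, ← Matrix.sum_mul, ← Matrix.mul_sum,
    sum_transpose_blockSelector_mul_mul]

theorem sum_blockRow_decomposition [CommRing R] (M : Matrix (Σ j, m j) (Σ j, m j) R)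
    (F G H : ∀ i, Matrix (m i) (m i) R) :
    ∑ i, ((blockSelector R m i * M)ᵀ * F i * (blockSelector R m i * M) -
        (blockSelector R m i)ᵀ * (G i)ᵀ * (blockSelector R m i * M) -
        (blockSelector R m i * M)ᵀ * G i * blockSelector R m i +
        (blockSelector R m i)ᵀ * H i * blockSelector R m i) =
      Mᵀ * blockDiagonal' F * M - (blockDiagonal' G)ᵀ * M - Mᵀ * blockDiagonal' G +
        blockDiagonal' H := by
  have hF := sum_transpose_blockSelector_mul_mul_mul M M F
  have hGt := sum_transpose_blockSelector_mul_mul_mul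
    (1 : Matrix (Σ j, m j) (Σ j, m j) R) M fun i => (G i)ᵀ
  have hG := sum_transpose_blockSelector_mul_mul_mul M (1 : Matrix (Σ j, m j) (Σ j, m j) R) G
  simp only [Matrix.mul_one, transpose_one, Matrix.one_mul, ← blockDiagonal'_transpose] at hGt hG
  simp only [Finset.sum_add_distrib, Finset.sum_sub_distrib, hF, hGt, hG,
    sum_transpose_blockSelector_mul_mul]

end BlockSelector

theorem posDef_blockDiagonal'_smul_one {ι R : Type*} [DecidableEq ι] {m : ι → Type*}
    [∀ i, Fintype (m i)] [∀ i, DecidableEq (m i)] [CommRing R] [PartialOrder R] [StarRing R]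
    [StarOrderedRing R] [NoZeroDivisors R] [Nontrivial R] {β : ι → R} (hβ : ∀ i, 0 < β i) :
    (blockDiagonal' fun i => β i • (1 : Matrix (m i) (m i) R)).PosDef := by
  simp_rw [smul_one_eq_diagonal, blockDiagonal'_diagonal]
  exact posDef_diagonal_iff.mpr fun j => hβ j.1

theorem stmt_8_general {k : ℕ} (p : Fin k → ℕ)
    (M : Matrix (Σ i, Fin (p i)) (Σ i, Fin (p i)) ℝ) (hM : M.IsSymm)
    (F G H : ∀ i, Matrix (Fin (p i)) (Fin (p i)) ℝ)
    (E : ∀ i, Matrix (Fin (p i)) (Σ j, Fin (p j)) ℝ)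
    (hE : ∀ i (a : Fin (p i)) (j : Σ j, Fin (p j)),
      E i a j = if h : j.1 = i then (if h ▸ j.2 = a then 1 else 0) else 0)
    (Mr : ∀ i, Matrix (Fin (p i)) (Σ j, Fin (p j)) ℝ)
    (hMr : ∀ i (a : Fin (p i)) (j : Σ j, Fin (p j)), Mr i a j = M ⟨i, a⟩ j)
    (hloc : ∀ i, ∃ β : ℝ, 0 < β ∧
      ((Mr i)ᵀ * F i * Mr i - (E i)ᵀ * (G i)ᵀ * Mr i - (Mr i)ᵀ * G i * E i +
        (E i)ᵀ * (H i - β • 1) * E i).PosSemidef) :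
    (M * blockDiagonal' F * Mᵀ - M * blockDiagonal' G -
      (blockDiagonal' G)ᵀ * Mᵀ + blockDiagonal' H).PosDef := by
  choose β hβ hlocal using hloc
  have hE' : ∀ i, E i = blockSelector ℝ (fun j => Fin (p j)) i :=
    fun i => ext fun a j => (hE i a j).trans (blockSelector_apply i a j).symm
  have hMr' : ∀ i, Mr i = E i * M := by
    intro i
    ext a j
    rw [hMr, hE', blockSelector_mul]
    rfl
  have hsum := sum_blockRow_decomposition M F G (H - fun i => β i • 1)
  simp only [Pi.sub_apply, ← hE', ← hMr', blockDiagonal'_sub, hM.eq] at hsum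
  have hsplit : M * blockDiagonal' F * Mᵀ - M * blockDiagonal' G - (blockDiagonal' G)ᵀ * Mᵀ +
      blockDiagonal' H = ∑ i, ((Mr i)ᵀ * F i * Mr i - (E i)ᵀ * (G i)ᵀ * Mr i -
        (Mr i)ᵀ * G i * E i + (E i)ᵀ * (H i - β i • 1) * E i) +
      blockDiagonal' fun i => β i • 1 := by
    rw [hsum, hM.eq]
    abel
  rw [hsplit]
  exact PosDef.posSemidef_add (posSemidef_sum _ fun i _ => hlocal i)
    (posDef_blockDiagonal'_smul_one hβ)

/-- Decentralized conditions imply the global stability condition: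
if each block row M_i^r satisfies the local LMI with some β_i > 0, then
M F Mᵀ - M G - Gᵀ Mᵀ + H ≻ 0 for the block-diagonal F, G, H. -/
theorem stmt_8 {k : ℕ} (p : Fin k → ℕ)
    (M : Matrix (Σ i, Fin (p i)) (Σ i, Fin (p i)) ℝ) (hM : M.IsSymm)
    (F G H : ∀ i, Matrix (Fin (p i)) (Fin (p i)) ℝ)
    (hF : ∀ i, (F i).IsSymm) (hH : ∀ i, (H i).IsSymm)
    (E : ∀ i, Matrix (Fin (p i)) (Σ j, Fin (p j)) ℝ)
    (hE : ∀ i (a : Fin (p i)) (j : Σ j, Fin (p j)),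
      E i a j = if h : j.1 = i then (if h ▸ j.2 = a then 1 else 0) else 0)
    (Mr : ∀ i, Matrix (Fin (p i)) (Σ j, Fin (p j)) ℝ)
    (hMr : ∀ i (a : Fin (p i)) (j : Σ j, Fin (p j)), Mr i a j = M ⟨i, a⟩ j)
    (hloc : ∀ i, ∃ β : ℝ, 0 < β ∧
      ((Mr i)ᵀ * F i * Mr i - (E i)ᵀ * (G i)ᵀ * Mr i - (Mr i)ᵀ * G i * E i +
        (E i)ᵀ * (H i - β • 1) * E i).PosSemidef) :
    (M * blockDiagonal' F * Mᵀ - M * blockDiagonal' G -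
      (blockDiagonal' G)ᵀ * Mᵀ + blockDiagonal' H).PosDef :=
  stmt_8_general p M hM F G H E hE Mr hMr hloc
end

section
/- Let W ∈ ℝ^{(n+p)×N} and suppose the data matrices satisfy [X⁺; Y] = [A, B₁, B₂; C, D₁, D₂][X; U; V] + W. Then Wᵀ satisfies the QMI [I; Wᵀ]ᵀ Φ [I; Wᵀ] ≥ 0 (for symmetric Φ ∈ S^{(n+p)+N}) if and only if the stacked system matrix Z := [Aᵀ, Cᵀ; B₁ᵀ, D₁ᵀ; B₂ᵀ, D₂ᵀ] ∈ ℝ^{(n+m+p)×(n+p)} satisfies [I; Z]ᵀ J [I; Z] ≥ 0, where J := [I, [X⁺; Y]; 0, [−X; −U; −V]] Φ [I, [X⁺; Y]; 0, [−X; −U; −V]]ᵀ. -/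
/-!
The map `Z ↦ [I; Z]` turns the data equation into a congruence: with
`M = [I, F; 0, -H]`, where `F = [X⁺; Y]` and `H = [X; U; V]`, one has
`Mᵀ [I; Gᵀ] = [I; (F - G H)ᵀ] = [I; Wᵀ]` for the system matrix `G`. Hence the quadratic form of
`J = M Φ Mᵀ` at `[I; Gᵀ]` is literally the quadratic form of `Φ` at `[I; Wᵀ]`.
-/

open Matrix

namespace Matrix

variable {R : Type*} [CommRing R]

theorem transpose_mul_conj_mul {ι κ ν : Type*} [Fintype ι] [Fintype κ]
    (S : Matrix ι ν R) (M : Matrix ι κ R) (Φ : Matrix κ κ R) :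
    Sᵀ * (M * Φ * Mᵀ) * S = (Mᵀ * S)ᵀ * Φ * (Mᵀ * S) := by
  simp only [transpose_mul, transpose_transpose, Matrix.mul_assoc]

theorem fromBlocks_one_neg_transpose_mul_fromRows_one {l r c : Type*}
    [Fintype l] [Fintype r] [DecidableEq l]
    (F : Matrix l c R) (H : Matrix r c R) (G : Matrix l r R) :
    (fromBlocks (1 : Matrix l l R) F 0 (-H))ᵀ * fromRows (1 : Matrix l l R) Gᵀ =
      fromRows 1 (F - G * H)ᵀ := by
  rw [fromBlocks_transpose, fromBlocks_mul_fromRows]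
  simp [transpose_mul, sub_eq_add_neg]

end Matrix

theorem stmt_11_general {n m p N : ℕ}
    (X Xp : Matrix (Fin n) (Fin N) ℝ) (U : Matrix (Fin m) (Fin N) ℝ)
    (V Y : Matrix (Fin p) (Fin N) ℝ)
    (A : Matrix (Fin n) (Fin n) ℝ) (B₁ : Matrix (Fin n) (Fin m) ℝ)
    (B₂ : Matrix (Fin n) (Fin p) ℝ)
    (C : Matrix (Fin p) (Fin n) ℝ) (D₁ : Matrix (Fin p) (Fin m) ℝ)
    (D₂ : Matrix (Fin p) (Fin p) ℝ)
    (W : Matrix (Fin n ⊕ Fin p) (Fin N) ℝ)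
    (Φ : Matrix ((Fin n ⊕ Fin p) ⊕ Fin N) ((Fin n ⊕ Fin p) ⊕ Fin N) ℝ)
    (hdata : fromRows Xp Y =
      fromBlocks A (fromCols B₁ B₂) C (fromCols D₁ D₂) *
        fromRows X (fromRows U V) + W) :
    ((fromRows (1 : Matrix (Fin n ⊕ Fin p) (Fin n ⊕ Fin p) ℝ) Wᵀ)ᵀ * Φ * fromRows 1 Wᵀ).PosSemidef ↔
    ((fromRows (1 : Matrix (Fin n ⊕ Fin p) (Fin n ⊕ Fin p) ℝ) (fromBlocks A (fromCols B₁ B₂) C (fromCols D₁ D₂))ᵀ)ᵀ *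
      (fromBlocks (1 : Matrix (Fin n ⊕ Fin p) (Fin n ⊕ Fin p) ℝ) (fromRows Xp Y) 0 (-(fromRows X (fromRows U V))) * Φ *
       (fromBlocks (1 : Matrix (Fin n ⊕ Fin p) (Fin n ⊕ Fin p) ℝ) (fromRows Xp Y) 0 (-(fromRows X (fromRows U V))))ᵀ) *
      fromRows 1 (fromBlocks A (fromCols B₁ B₂) C (fromCols D₁ D₂))ᵀ).PosSemidef := by
  have hW : fromRows Xp Y - fromBlocks A (fromCols B₁ B₂) C (fromCols D₁ D₂) *
      fromRows X (fromRows U V) = W := by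
    rw [hdata, add_sub_cancel_left]
  have hJ := transpose_mul_conj_mul
    (fromRows 1 (fromBlocks A (fromCols B₁ B₂) C (fromCols D₁ D₂))ᵀ)
    (fromBlocks 1 (fromRows Xp Y) 0 (-(fromRows X (fromRows U V)))) Φ
  rw [fromBlocks_one_neg_transpose_mul_fromRows_one, hW] at hJ
  -- Some products in the statement elaborate to the defeq `CStarMatrix` multiplication, so
  -- `hJ` cannot be rewritten into the goal and is applied up to defeq instead.
  exact Iff.of_eq (congrArg PosSemidef hJ).symm

/-- Parametrization of systems consistent with noisy data: with
[X⁺;Y] = [A,B₁,B₂;C,D₁,D₂][X;U;V] + W, the noise QMI for Wᵀ holds iff the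
stacked system matrix Z = [Aᵀ,Cᵀ;B₁ᵀ,D₁ᵀ;B₂ᵀ,D₂ᵀ] satisfies the QMI for J. -/
theorem stmt_11 {n m p N : ℕ}
    (X Xp : Matrix (Fin n) (Fin N) ℝ) (U : Matrix (Fin m) (Fin N) ℝ)
    (V Y : Matrix (Fin p) (Fin N) ℝ)
    (A : Matrix (Fin n) (Fin n) ℝ) (B₁ : Matrix (Fin n) (Fin m) ℝ)
    (B₂ : Matrix (Fin n) (Fin p) ℝ)
    (C : Matrix (Fin p) (Fin n) ℝ) (D₁ : Matrix (Fin p) (Fin m) ℝ)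
    (D₂ : Matrix (Fin p) (Fin p) ℝ)
    (W : Matrix (Fin n ⊕ Fin p) (Fin N) ℝ)
    (Φ : Matrix ((Fin n ⊕ Fin p) ⊕ Fin N) ((Fin n ⊕ Fin p) ⊕ Fin N) ℝ)
    (hΦ : Φ.IsSymm)
    (hdata : fromRows Xp Y =
      fromBlocks A (fromCols B₁ B₂) C (fromCols D₁ D₂) *
        fromRows X (fromRows U V) + W) :
    ((fromRows (1 : Matrix (Fin n ⊕ Fin p) (Fin n ⊕ Fin p) ℝ) Wᵀ)ᵀ * Φ * fromRows 1 Wᵀ).PosSemidef ↔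
    ((fromRows (1 : Matrix (Fin n ⊕ Fin p) (Fin n ⊕ Fin p) ℝ) (fromBlocks A (fromCols B₁ B₂) C (fromCols D₁ D₂))ᵀ)ᵀ *
      (fromBlocks (1 : Matrix (Fin n ⊕ Fin p) (Fin n ⊕ Fin p) ℝ) (fromRows Xp Y) 0 (-(fromRows X (fromRows U V))) * Φ *
       (fromBlocks (1 : Matrix (Fin n ⊕ Fin p) (Fin n ⊕ Fin p) ℝ) (fromRows Xp Y) 0 (-(fromRows X (fromRows U V))))ᵀ) *
      fromRows 1 (fromBlocks A (fromCols B₁ B₂) C (fromCols D₁ D₂))ᵀ).PosSemidef :=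
  stmt_11_general X Xp U V Y A B₁ B₂ C D₁ D₂ W Φ hdata
end

section
/- Let Θ ∈ S^{q+r} be symmetric and invertible with block Θ₂₂ ≤ 0, ker(Θ₂₂) ⊆ ker(Θ₁₂), and Θ₁₁ − Θ₁₂Θ₂₂†Θ₂₁ ≥ 0 (i.e., Θ ∈ Π_{q,r}), and suppose the set { Z ∈ ℝ^{r×q} : [I; Z]ᵀΘ[I; Z] ≥ 0 } is nonempty. Then Θ has inertia (r, 0, q): exactly r negative and q positive eigenvalues. -/
open Matrix

/-- Y is the Moore-Penrose pseudoinverse of A (four Penrose equations). -/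
def IsMoorePenrose {m n : Type*} [Fintype m] [Fintype n]
    (A : Matrix m n ℝ) (Y : Matrix n m ℝ) : Prop :=
  A * Y * A = A ∧ Y * A * Y = Y ∧ (A * Y)ᵀ = A * Y ∧ (Y * A)ᵀ = Y * A

/-! Invertibility of `Θ` and `ker Θ₂₂ ⊆ ker Θ₁₂` force `Θ₂₂` to be invertible, so its
pseudoinverse is its inverse; `det Θ = det Θ₂₂ · det S` then makes the Schur complement
`S = Θ₁₁ - Θ₁₂ Θ₂₂⁻¹ Θ₂₁` invertible, hence positive definite. The quadratic form of `Θ` equals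
`uᵀ S u` on the `q`-dimensional graph `{(u, -Θ₂₂⁻¹ Θ₂₁ u)}` and `vᵀ Θ₂₂ v` on the
`r`-dimensional subspace `{(0, v)}`. A subspace on which the form is positive (negative) definite
meets the span of the eigenvectors with nonpositive (nonnegative) eigenvalues trivially, so `Θ` has
at least `q` positive and at least `r` negative eigenvalues, which accounts for all `q + r`. -/

theorem finrank_le_card_pos_of_sum_mul_sq_pos {ι E : Type*} [Fintype ι] [AddCommGroup E]
    [Module ℝ E] (d : ι → ℝ) (f : E →ₗ[ℝ] ι → ℝ)
    (hf : ∀ x ≠ 0, 0 < ∑ i, d i * f x i ^ 2) :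
    Module.finrank ℝ E ≤ Fintype.card {i // 0 < d i} := by
  let restrict := LinearMap.funLeft ℝ ℝ (Subtype.val : {i // 0 < d i} → ι) ∘ₗ f
  have hinj : Function.Injective restrict := by
    rw [← LinearMap.ker_eq_bot, Submodule.eq_bot_iff]
    intro x hx
    by_contra hx0
    have hvanish : ∀ i, 0 < d i → f x i = 0 := fun i hi => congrFun hx ⟨i, hi⟩
    have hnonpos : ∑ i, d i * f x i ^ 2 ≤ 0 := Finset.sum_nonpos fun i _ => by
      by_cases hi : 0 < d i
      · simp [hvanish i hi]
      · exact mul_nonpos_of_nonpos_of_nonneg (not_lt.mp hi) (sq_nonneg _)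
    exact (hf x hx0).not_ge hnonpos
  simpa using LinearMap.finrank_le_finrank_of_injective hinj

namespace Matrix.IsHermitian

variable {ι : Type*} [Fintype ι] [DecidableEq ι] {A : Matrix ι ι ℝ}

theorem dotProduct_mulVec_eq_sum_eigenvalues_s13 (hA : A.IsHermitian) (x : ι → ℝ) :
    x ⬝ᵥ A *ᵥ x =
      ∑ i, hA.eigenvalues i * (star (hA.eigenvectorUnitary : Matrix ι ι ℝ) *ᵥ x) i ^ 2 := by
  have hUt : star (hA.eigenvectorUnitary : Matrix ι ι ℝ) =
      (hA.eigenvectorUnitary : Matrix ι ι ℝ)ᵀ := by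
    rw [star_eq_conjTranspose, conjTranspose_eq_transpose_of_trivial]
  conv_lhs => rw [hA.spectral_theorem, Unitary.conjStarAlgAut_apply, ← mulVec_mulVec,
    ← mulVec_mulVec, dotProduct_mulVec, ← mulVec_transpose, ← hUt]
  simp only [dotProduct, mulVec_diagonal, Function.comp_apply, RCLike.ofReal_real_eq_id, id]
  exact Finset.sum_congr rfl fun i _ => by ring

theorem finrank_le_card_eigenvalues_pos (hA : A.IsHermitian) {E : Type*} [AddCommGroup E]
    [Module ℝ E] (f : E →ₗ[ℝ] ι → ℝ) (hf : ∀ x ≠ 0, 0 < f x ⬝ᵥ A *ᵥ f x) :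
    Module.finrank ℝ E ≤ Fintype.card {i // 0 < hA.eigenvalues i} :=
  finrank_le_card_pos_of_sum_mul_sq_pos _
    ((star (hA.eigenvectorUnitary : Matrix ι ι ℝ)).mulVecLin ∘ₗ f) fun x hx => by
      simpa [hA.dotProduct_mulVec_eq_sum_eigenvalues_s13] using hf x hx

theorem finrank_le_card_eigenvalues_neg (hA : A.IsHermitian) {E : Type*} [AddCommGroup E]
    [Module ℝ E] (f : E →ₗ[ℝ] ι → ℝ) (hf : ∀ x ≠ 0, f x ⬝ᵥ A *ᵥ f x < 0) :
    Module.finrank ℝ E ≤ Fintype.card {i // hA.eigenvalues i < 0} := by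
  have := finrank_le_card_pos_of_sum_mul_sq_pos (fun i => -hA.eigenvalues i)
    ((star (hA.eigenvectorUnitary : Matrix ι ι ℝ)).mulVecLin ∘ₗ f) fun x hx => by
      simpa [Finset.sum_neg_distrib, hA.dotProduct_mulVec_eq_sum_eigenvalues_s13] using hf x hx
  simpa only [neg_pos] using this

theorem card_eigenvalues_neg_add_zero_add_pos (hA : A.IsHermitian) :
    Fintype.card {i // hA.eigenvalues i < 0} + Fintype.card {i // hA.eigenvalues i = 0} +
      Fintype.card {i // 0 < hA.eigenvalues i} = Fintype.card ι := by
  simp only [Fintype.card_subtype, Finset.card_filter, ← Finset.sum_add_distrib]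
  rw [← Finset.card_univ, Finset.card_eq_sum_ones]
  refine Finset.sum_congr rfl fun i _ => ?_
  rcases lt_trichotomy (hA.eigenvalues i) 0 with h | h | h
  · simp [h, h.ne, h.not_gt]
  · simp [h]
  · simp [h, h.ne', h.not_gt]

end Matrix.IsHermitian

theorem inertia_eq_of_dotProduct_mulVec_pos_of_neg {ι E F : Type*} [Fintype ι] [DecidableEq ι]
    [AddCommGroup E] [Module ℝ E] [AddCommGroup F] [Module ℝ F]
    {A : Matrix ι ι ℝ} (hA : A.IsHermitian) (f : E →ₗ[ℝ] ι → ℝ) (g : F →ₗ[ℝ] ι → ℝ)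
    (hf : ∀ x ≠ 0, 0 < f x ⬝ᵥ A *ᵥ f x) (hg : ∀ y ≠ 0, g y ⬝ᵥ A *ᵥ g y < 0)
    (hdim : Module.finrank ℝ E + Module.finrank ℝ F = Fintype.card ι) :
    inertia A hA = (Module.finrank ℝ F, 0, Module.finrank ℝ E) := by
  have hpos := hA.finrank_le_card_eigenvalues_pos f hf
  have hneg := hA.finrank_le_card_eigenvalues_neg g hg
  have hcard := hA.card_eigenvalues_neg_add_zero_add_pos
  simp only [inertia, Prod.mk.injEq]
  omega

theorem Matrix.isUnit_toBlocks₂₂_of_ker_le {m n K : Type*} [Fintype m] [Fintype n]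
    [DecidableEq m] [DecidableEq n] [Field K] {Θ : Matrix (m ⊕ n) (m ⊕ n) K} (hΘ : IsUnit Θ)
    (hker : ∀ x, Θ.toBlocks₂₂ *ᵥ x = 0 → Θ.toBlocks₁₂ *ᵥ x = 0) : IsUnit Θ.toBlocks₂₂ := by
  rw [← mulVec_injective_iff_isUnit, ← coe_mulVecLin, injective_iff_map_eq_zero]
  intro x (hx : Θ.toBlocks₂₂ *ᵥ x = 0)
  have hΘx : Θ *ᵥ Sum.elim 0 x = Θ *ᵥ 0 := by
    rw [← fromBlocks_toBlocks Θ, fromBlocks_mulVec]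
    simp [hker x hx, hx]
  funext i
  exact congrFun (mulVec_injective_iff_isUnit.mpr hΘ hΘx) (Sum.inr i)

theorem IsMoorePenrose.eq_nonsing_inv {n : Type*} [Fintype n] [DecidableEq n]
    {A Y : Matrix n n ℝ} (h : IsMoorePenrose A Y) (hA : IsUnit A) : Y = A⁻¹ :=
  (inv_eq_left_inv (hA.mul_left_cancel (by rw [← Matrix.mul_assoc, h.1, Matrix.mul_one]))).symm

theorem Matrix.fromBlocks_mulVec_schur {m n K : Type*} [Fintype m] [Fintype n] [DecidableEq n]
    [Field K] (A : Matrix m m K) (B : Matrix m n K) (C : Matrix n m K) {D : Matrix n n K}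
    (hD : IsUnit D.det) (u : m → K) :
    fromBlocks A B C D *ᵥ Sum.elim u (-(D⁻¹ * C) *ᵥ u) = Sum.elim ((A - B * D⁻¹ * C) *ᵥ u) 0 := by
  simp only [fromBlocks_mulVec, Sum.elim_comp_inl, Sum.elim_comp_inr, neg_mulVec, mulVec_neg,
    mulVec_mulVec, ← Matrix.mul_assoc, mul_nonsing_inv _ hD, Matrix.one_mul, add_neg_cancel,
    add_mulVec, sub_eq_add_neg]

theorem Matrix.det_schur_toBlocks₂₂_ne_zero {m n K : Type*} [Fintype m] [Fintype n]
    [DecidableEq m] [DecidableEq n] [Field K] {Θ : Matrix (m ⊕ n) (m ⊕ n) K} (hΘ : IsUnit Θ)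
    (hD : IsUnit Θ.toBlocks₂₂.det) :
    (Θ.toBlocks₁₁ - Θ.toBlocks₁₂ * Θ.toBlocks₂₂⁻¹ * Θ.toBlocks₂₁).det ≠ 0 := by
  let := invertibleOfIsUnitDet _ hD
  have hdet := det_fromBlocks₂₂ Θ.toBlocks₁₁ Θ.toBlocks₁₂ Θ.toBlocks₂₁ Θ.toBlocks₂₂
  rw [fromBlocks_toBlocks, invOf_eq_nonsing_inv] at hdet
  exact right_ne_zero_of_mul (hdet ▸ ((isUnit_iff_isUnit_det _).mp hΘ).ne_zero)

theorem stmt_13_general {q r : ℕ}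
    (Θ : Matrix (Fin q ⊕ Fin r) (Fin q ⊕ Fin r) ℝ)
    (hΘ : Θ.IsHermitian) (hinv : IsUnit Θ)
    (h22 : (-(Θ.toBlocks₂₂)).PosSemidef)
    (hker : ∀ x : Fin r → ℝ, Θ.toBlocks₂₂.mulVec x = 0 → Θ.toBlocks₁₂.mulVec x = 0)
    (hschur : ∃ Y, IsMoorePenrose Θ.toBlocks₂₂ Y ∧
      (Θ.toBlocks₁₁ - Θ.toBlocks₁₂ * Y * Θ.toBlocks₂₁).PosSemidef) :
    inertia Θ hΘ = (r, 0, q) := by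
  obtain ⟨Y, hY, hS⟩ := hschur
  have hD : IsUnit Θ.toBlocks₂₂ := isUnit_toBlocks₂₂_of_ker_le hinv hker
  have hDdet : IsUnit Θ.toBlocks₂₂.det := (isUnit_iff_isUnit_det _).mp hD
  rw [hY.eq_nonsing_inv hD] at hS
  have hSdef := hS.posDef_iff_det_ne_zero.mpr (det_schur_toBlocks₂₂_ne_zero hinv hDdet)
  have hnegD : (-Θ.toBlocks₂₂).PosDef := h22.posDef_iff_isUnit.mpr hD.neg
  have hΘ_blocks : ∀ x, Θ *ᵥ x =
      fromBlocks Θ.toBlocks₁₁ Θ.toBlocks₁₂ Θ.toBlocks₂₁ Θ.toBlocks₂₂ *ᵥ x :=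
    fun x => by rw [fromBlocks_toBlocks]
  have := inertia_eq_of_dotProduct_mulVec_pos_of_neg hΘ
    (fromRows 1 (-(Θ.toBlocks₂₂⁻¹ * Θ.toBlocks₂₁))).mulVecLin
    (fromRows (0 : Matrix (Fin q) (Fin r) ℝ) 1).mulVecLin
    (fun u hu => ?_) (fun v hv => ?_) (by simp)
  · simpa using this
  · rw [mulVecLin_apply, fromRows_mulVec, one_mulVec, hΘ_blocks,
      fromBlocks_mulVec_schur _ _ _ hDdet]
    simpa using hSdef.dotProduct_mulVec_pos hu
  · rw [mulVecLin_apply, fromRows_mulVec, one_mulVec, zero_mulVec, hΘ_blocks, fromBlocks_mulVec]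
    simpa [neg_mulVec] using hnegD.dotProduct_mulVec_pos hv

/-- An invertible symmetric Θ ∈ Π_{q,r} (Θ₂₂ ≤ 0, ker Θ₂₂ ⊆ ker Θ₁₂,
Θ₁₁ - Θ₁₂Θ₂₂†Θ₂₁ ≥ 0) with nonempty QMI set has inertia (r, 0, q). -/
theorem stmt_13 {q r : ℕ}
    (Θ : Matrix (Fin q ⊕ Fin r) (Fin q ⊕ Fin r) ℝ)
    (hΘ : Θ.IsHermitian) (hinv : IsUnit Θ)
    (h22 : (-(Θ.toBlocks₂₂)).PosSemidef)
    (hker : ∀ x : Fin r → ℝ, Θ.toBlocks₂₂.mulVec x = 0 → Θ.toBlocks₁₂.mulVec x = 0)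
    (hschur : ∃ Y, IsMoorePenrose Θ.toBlocks₂₂ Y ∧
      (Θ.toBlocks₁₁ - Θ.toBlocks₁₂ * Y * Θ.toBlocks₂₁).PosSemidef)
    (hne : ∃ Z : Matrix (Fin r) (Fin q) ℝ,
      ((fromRows (1 : Matrix (Fin q) (Fin q) ℝ) Z)ᵀ * Θ * fromRows (1 : Matrix (Fin q) (Fin q) ℝ) Z).PosSemidef) :
    inertia Θ hΘ = (r, 0, q) :=
  stmt_13_general Θ hΘ hinv h22 hker hschur
end
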